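/- arXiv:2302.12581 — 5 statements merged into one kernel-verified Lean document; each statement's English description precedes it below -/
import Mathlib

section
/- Let U₁, V₁, U₂, V₂ be independent standard normal random variables, and let T = (U₁V₁)/(U₂V₂). Then T has the same distribution as the product C₁·C₂ of two independent standard Cauchy random variables, and its density is f_T(t) = (2/π²) · log|t| / (t² − 1) for t ∈ ℝ, |t| ≠ 1. -/
/-!
Write `T = (U₁ / U₂) * (V₁ / V₂)`. The two ratios are independent, and each is standard Cauchy:
given the denominator `x`, the numerator divided by `x` has density `φ(x t) |x|`, and
`∫ φ(x) φ(x t) |x| dx = 1 / (π (1 + t²))`. Likewise, given the first Cauchy factor `x`, the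
product has density `c(t / x) / |x|`, and
`∫ c(x) c(t / x) / |x| dx = π⁻² ∫ |x| / ((1 + x²)(x² + t²)) dx = (2 / π²) log |t| / (t² - 1)`,
since `(log (1 + x²) - log (x² + t²)) / (2 (t² - 1))` is a primitive of `x / ((1 + x²)(x² + t²))`.
-/

open MeasureTheory ProbabilityTheory Real Set Filter
open scoped ENNReal Topology

lemma Real.map_withDensity_mul_left {a : ℝ} (ha : a ≠ 0) {f : ℝ → ℝ≥0∞} (hf : Measurable f) :
    (volume.withDensity f).map (a * ·) =
      volume.withDensity fun t => f (a⁻¹ * t) * ENNReal.ofReal |a⁻¹| := by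
  ext s hs
  have hmul : Measurable (a * · : ℝ → ℝ) := measurable_const_mul a
  have hsubst := setLIntegral_map hs (hf.comp (measurable_const_mul a⁻¹)) hmul (μ := volume)
  simp only [Function.comp_apply, inv_mul_cancel_left₀ ha] at hsubst
  rw [Real.map_volume_mul_left ha, Measure.restrict_smul, lintegral_smul_measure] at hsubst
  rw [Measure.map_apply hmul hs, withDensity_apply _ (hmul hs), withDensity_apply _ hs,
    ← hsubst, lintegral_mul_const' _ _ ENNReal.ofReal_ne_top, smul_eq_mul, mul_comm]

lemma MeasureTheory.Measure.map_uncurry_prod_eq_withDensity_lintegral {α β γ : Type*}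
    [MeasurableSpace α] [MeasurableSpace β] [MeasurableSpace γ]
    {ν : Measure α} {ρ : Measure β} {m : Measure γ} [SFinite ν] [SFinite ρ] [SFinite m]
    {F : α → β → γ} (hF : Measurable (Function.uncurry F))
    {k : α → γ → ℝ≥0∞} (hk : Measurable (Function.uncurry k))
    (h : ∀ᵐ x ∂ν, ρ.map (F x) = m.withDensity (k x)) :
    (ν.prod ρ).map (Function.uncurry F) = m.withDensity fun t => ∫⁻ x, k x t ∂ν := by
  ext s hs
  rw [Measure.map_apply hF hs, withDensity_apply _ hs, Measure.prod_apply (hF hs),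
    ← lintegral_lintegral_swap hk.aemeasurable]
  refine lintegral_congr_ae ?_
  filter_upwards [h] with x hx
  rw [← withDensity_apply _ hs, ← hx, Measure.map_apply hF.of_uncurry_left hs]
  rfl

lemma integral_Ioi_mul_exp_neg_mul_sq {b : ℝ} (hb : 0 < b) :
    ∫ x in Ioi (0 : ℝ), x * rexp (-b * x ^ 2) = (2 * b)⁻¹ := by
  have h := integral_rpow_mul_exp_neg_mul_rpow two_pos (by norm_num : (-1 : ℝ) < 1) hb
  norm_num at h
  simpa [rpow_neg_one, mul_comm] using h

lemma integrable_abs_mul_exp_neg_mul_sq {b : ℝ} (hb : 0 < b) :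
    Integrable fun x : ℝ => |x| * rexp (-b * x ^ 2) := by
  simpa [abs_mul] using (integrable_mul_exp_neg_mul_sq hb).abs

lemma integral_abs_mul_exp_neg_mul_sq {b : ℝ} (hb : 0 < b) :
    ∫ x, |x| * rexp (-b * x ^ 2) = b⁻¹ := by
  have h := integral_comp_abs (f := fun x => x * rexp (-b * x ^ 2))
  simp only [sq_abs] at h
  rw [h, integral_Ioi_mul_exp_neg_mul_sq hb]
  field_simp

lemma tendsto_log_one_add_sq_sub_log_sq_add {a : ℝ} (ha : 0 < a) :
    Tendsto (fun x : ℝ => log (1 + x ^ 2) - log (x ^ 2 + a)) atTop (𝓝 0) := by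
  have hinv : Tendsto (fun x : ℝ => (x ^ 2 + a)⁻¹) atTop (𝓝 0) :=
    (tendsto_atTop_add_const_right _ a (tendsto_pow_atTop two_ne_zero)).inv_tendsto_atTop
  have hratio : Tendsto (fun x : ℝ => 1 + (1 - a) * (x ^ 2 + a)⁻¹) atTop (𝓝 1) := by
    simpa using (hinv.const_mul (1 - a)).const_add 1
  have hlog := ((continuousAt_log one_ne_zero).tendsto.comp hratio)
  rw [log_one] at hlog
  refine hlog.congr fun x => ?_
  have hx : 0 < x ^ 2 + a := by positivity
  rw [Function.comp_apply, ← log_div (by positivity) hx.ne']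
  congr 1
  field_simp
  ring

lemma integral_Ioi_div_one_add_sq_mul_sq_add {a : ℝ} (ha : 0 < a) (ha1 : a ≠ 1) :
    ∫ x in Ioi (0 : ℝ), x / ((1 + x ^ 2) * (x ^ 2 + a)) = log a / (2 * (a - 1)) := by
  have ha1' : a - 1 ≠ 0 := sub_ne_zero.mpr ha1
  have hderiv : ∀ x ∈ Ioi (0 : ℝ), HasDerivAt
      (fun x => (log (1 + x ^ 2) - log (x ^ 2 + a)) / (2 * (a - 1)))
      (x / ((1 + x ^ 2) * (x ^ 2 + a))) x := by
    intro x _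
    have h1 : (0 : ℝ) < 1 + x ^ 2 := by positivity
    have h2 : (0 : ℝ) < x ^ 2 + a := by positivity
    refine ((((hasDerivAt_pow 2 x).const_add 1).log h1.ne').sub
      (((hasDerivAt_pow 2 x).add_const a).log h2.ne')).div_const (2 * (a - 1)) |>.congr_deriv ?_
    norm_num
    field_simp
    ring
  have hcont : ContinuousWithinAt (fun x => (log (1 + x ^ 2) - log (x ^ 2 + a)) / (2 * (a - 1)))
      (Ici 0) 0 := by
    refine ContinuousAt.continuousWithinAt ?_
    fun_prop (disch := positivity)
  rw [integral_Ioi_of_hasDerivAt_of_nonneg hcont hderiv (fun x (hx : 0 < x) => by positivity)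
    (by simpa using (tendsto_log_one_add_sq_sub_log_sq_add ha).div_const (2 * (a - 1)))]
  simp
  ring

lemma integrable_abs_div_one_add_sq_mul_sq_add_sq {t : ℝ} (ht : t ≠ 0) :
    Integrable fun x : ℝ => |x| / ((1 + x ^ 2) * (x ^ 2 + t ^ 2)) := by
  refine (integrable_inv_one_add_sq.const_mul (2 * |t|)⁻¹).mono'
    (by fun_prop : Measurable _).aestronglyMeasurable (.of_forall fun x => ?_)
  have ht' : 0 < |t| := abs_pos.mpr ht
  rw [norm_of_nonneg (by positivity), div_le_iff₀ (by positivity)]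
  have hamgm : 2 * |x| * |t| ≤ x ^ 2 + t ^ 2 := by
    nlinarith [sq_nonneg (|x| - |t|), sq_abs x, sq_abs t]
  calc |x| = (2 * |t|)⁻¹ * (1 + x ^ 2)⁻¹ * ((1 + x ^ 2) * (2 * |x| * |t|)) := by
        field_simp
    _ ≤ (2 * |t|)⁻¹ * (1 + x ^ 2)⁻¹ * ((1 + x ^ 2) * (x ^ 2 + t ^ 2)) := by gcongr

namespace ProbabilityTheory

lemma IndepFun.map_comp_prodMk {Ω β γ δ : Type*} [MeasurableSpace Ω] [MeasurableSpace β]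
    [MeasurableSpace γ] [MeasurableSpace δ] {μ : Measure Ω} [IsFiniteMeasure μ]
    {X : Ω → β} {Y : Ω → γ} (hXY : IndepFun X Y μ) (hX : AEMeasurable X μ)
    (hY : AEMeasurable Y μ) {φ : β × γ → δ} (hφ : Measurable φ) :
    μ.map (fun ω => φ (X ω, Y ω)) = ((μ.map X).prod (μ.map Y)).map φ := by
  rw [← hXY.map_prod_eq_prod_map_map hX hY,
    hφ.aemeasurable.map_map_of_aemeasurable (hX.prodMk hY)]
  rfl

lemma cauchyPDFReal_zero_one (x : ℝ) : cauchyPDFReal 0 1 x = π⁻¹ * (1 + x ^ 2)⁻¹ := by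
  simp [cauchyPDFReal, add_comm]

lemma cauchyMeasure_zero_one :
    cauchyMeasure 0 1 = volume.withDensity fun x => ENNReal.ofReal (1 / (π * (1 + x ^ 2))) := by
  rw [cauchyMeasure_of_scale_ne_zero _ one_ne_zero]
  congr with x
  rw [cauchyPDF_def, cauchyPDFReal_zero_one, one_div, mul_inv]

lemma gaussianPDFReal_mul_gaussianPDFReal_mul (x t : ℝ) :
    gaussianPDFReal 0 1 x * gaussianPDFReal 0 1 (x * t) =
      (2 * π)⁻¹ * rexp (-((1 + t ^ 2) / 2) * x ^ 2) := by
  simp only [gaussianPDFReal, NNReal.coe_one, mul_one, sub_zero]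
  rw [mul_mul_mul_comm, ← mul_inv, Real.mul_self_sqrt (by positivity), ← Real.exp_add]
  ring_nf

lemma lintegral_gaussianPDF_mul_mul_abs (t : ℝ) :
    ∫⁻ x, gaussianPDF 0 1 (x * t) * ENNReal.ofReal |x| ∂gaussianReal 0 1 = cauchyPDF 0 1 t := by
  have hb : 0 < (1 + t ^ 2) / 2 := by positivity
  rw [gaussianReal_of_var_ne_zero _ one_ne_zero, lintegral_withDensity_eq_lintegral_mul _
    (measurable_gaussianPDF 0 1) (by fun_prop)]
  have hprod : (gaussianPDF 0 1 * fun x => gaussianPDF 0 1 (x * t) * ENNReal.ofReal |x|) =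
      fun x => ENNReal.ofReal ((2 * π)⁻¹ * (|x| * rexp (-((1 + t ^ 2) / 2) * x ^ 2))) := by
    ext x
    rw [Pi.mul_apply, gaussianPDF, gaussianPDF,
      ← ENNReal.ofReal_mul (gaussianPDFReal_nonneg 0 1 _),
      ← ENNReal.ofReal_mul (gaussianPDFReal_nonneg 0 1 x), ← mul_assoc,
      gaussianPDFReal_mul_gaussianPDFReal_mul]
    ring_nf
  rw [hprod, ← ofReal_integral_eq_lintegral_ofReal
    ((integrable_abs_mul_exp_neg_mul_sq hb).const_mul _) (.of_forall fun x => by positivity),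
    integral_const_mul, integral_abs_mul_exp_neg_mul_sq hb, cauchyPDF, cauchyPDFReal_zero_one]
  field_simp

lemma gaussianReal_map_div_const_eq_withDensity {x : ℝ} (hx : x ≠ 0) :
    (gaussianReal 0 1).map (· / x) =
      volume.withDensity fun t => gaussianPDF 0 1 (x * t) * ENNReal.ofReal |x| := by
  simp_rw [div_eq_inv_mul]
  rw [gaussianReal_of_var_ne_zero _ one_ne_zero,
    Real.map_withDensity_mul_left (inv_ne_zero hx) (measurable_gaussianPDF 0 1)]
  simp_rw [inv_inv]

lemma gaussianReal_prod_map_div :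
    ((gaussianReal 0 1).prod (gaussianReal 0 1)).map (fun p => p.1 / p.2) = cauchyMeasure 0 1 := by
  rw [← Measure.prod_swap, Measure.map_map (by fun_prop) measurable_swap]
  have hmix := Measure.map_uncurry_prod_eq_withDensity_lintegral (ν := gaussianReal 0 1)
    (ρ := gaussianReal 0 1) (m := volume) (F := fun x y => y / x) (by fun_prop)
    (k := fun x t => gaussianPDF 0 1 (x * t) * ENNReal.ofReal |x|) (by fun_prop) ?_
  · refine hmix.trans ?_
    simp_rw [lintegral_gaussianPDF_mul_mul_abs]
    exact (cauchyMeasure_of_scale_ne_zero _ one_ne_zero).symm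
  · filter_upwards [(gaussianReal_absolutelyContinuous 0 one_ne_zero).ae_le
      (Measure.ae_ne volume 0)] with x hx
    exact gaussianReal_map_div_const_eq_withDensity hx

lemma IndepFun.map_div_eq_cauchyMeasure {Ω : Type*} [MeasurableSpace Ω] {μ : Measure Ω}
    [IsFiniteMeasure μ] {X Y : Ω → ℝ} (hXY : IndepFun X Y μ) (hX : μ.map X = gaussianReal 0 1)
    (hY : μ.map Y = gaussianReal 0 1) : μ.map (fun ω => X ω / Y ω) = cauchyMeasure 0 1 := by
  rw [hXY.map_comp_prodMk (.of_map_ne_zero (hX ▸ IsProbabilityMeasure.ne_zero _))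
    (.of_map_ne_zero (hY ▸ IsProbabilityMeasure.ne_zero _))
    (by fun_prop : Measurable fun p : ℝ × ℝ => p.1 / p.2), hX, hY,
    gaussianReal_prod_map_div]

lemma cauchyMeasure_map_const_mul_eq_withDensity {x : ℝ} (hx : x ≠ 0) :
    (cauchyMeasure 0 1).map (x * ·) =
      volume.withDensity fun t => cauchyPDF 0 1 (x⁻¹ * t) * ENNReal.ofReal |x⁻¹| := by
  rw [cauchyMeasure_of_scale_ne_zero _ one_ne_zero,
    Real.map_withDensity_mul_left hx (measurable_cauchyPDF 0 1)]

lemma cauchyPDFReal_mul_cauchyPDFReal_inv_mul {x : ℝ} (hx : x ≠ 0) (t : ℝ) :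
    cauchyPDFReal 0 1 x * (cauchyPDFReal 0 1 (x⁻¹ * t) * |x⁻¹|) =
      (π ^ 2)⁻¹ * (|x| / ((1 + x ^ 2) * (x ^ 2 + t ^ 2))) := by
  have hx' : |x| ≠ 0 := abs_ne_zero.mpr hx
  rw [cauchyPDFReal_zero_one, cauchyPDFReal_zero_one, abs_inv, mul_pow, inv_pow, ← sq_abs x]
  field_simp

lemma lintegral_cauchyPDF_inv_mul_mul_abs {t : ℝ} (ht : t ≠ 0) (ht1 : t ^ 2 ≠ 1) :
    ∫⁻ x, cauchyPDF 0 1 (x⁻¹ * t) * ENNReal.ofReal |x⁻¹| ∂cauchyMeasure 0 1 =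
      ENNReal.ofReal (2 / π ^ 2 * log |t| / (t ^ 2 - 1)) := by
  rw [cauchyMeasure_of_scale_ne_zero _ one_ne_zero,
    lintegral_withDensity_eq_lintegral_mul _ (measurable_cauchyPDF 0 1) (by fun_prop)]
  have hprod :
      (cauchyPDF 0 1 * fun x => cauchyPDF 0 1 (x⁻¹ * t) * ENNReal.ofReal |x⁻¹|) =ᵐ[volume]
        fun x => ENNReal.ofReal ((π ^ 2)⁻¹ * (|x| / ((1 + x ^ 2) * (x ^ 2 + t ^ 2)))) := by
    filter_upwards [Measure.ae_ne volume 0] with x hx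
    rw [Pi.mul_apply, cauchyPDF, cauchyPDF,
      ← ENNReal.ofReal_mul (cauchyPDF_pos _ one_ne_zero _).le,
      ← ENNReal.ofReal_mul (cauchyPDF_pos _ one_ne_zero _).le,
      cauchyPDFReal_mul_cauchyPDFReal_inv_mul hx]
  have hsq : log (t ^ 2) = 2 * log |t| := by rw [← sq_abs, log_pow]; push_cast; ring
  have hint := integral_comp_abs (f := fun x => x / ((1 + x ^ 2) * (x ^ 2 + t ^ 2)))
  simp only [sq_abs] at hint
  rw [lintegral_congr_ae hprod, ← ofReal_integral_eq_lintegral_ofReal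
    ((integrable_abs_div_one_add_sq_mul_sq_add_sq ht).const_mul _)
    (.of_forall fun x => by positivity), integral_const_mul, hint,
    integral_Ioi_div_one_add_sq_mul_sq_add (by positivity) ht1, hsq]
  have ht1' : t ^ 2 - 1 ≠ 0 := sub_ne_zero.mpr ht1
  field_simp

lemma cauchyMeasure_prod_map_mul :
    ((cauchyMeasure 0 1).prod (cauchyMeasure 0 1)).map (fun p => p.1 * p.2) =
      volume.withDensity fun t => ENNReal.ofReal (2 / π ^ 2 * log |t| / (t ^ 2 - 1)) := by
  have hmix := Measure.map_uncurry_prod_eq_withDensity_lintegral (ν := cauchyMeasure 0 1)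
    (ρ := cauchyMeasure 0 1) (m := volume) (F := fun x y => x * y) (by fun_prop)
    (k := fun x t => cauchyPDF 0 1 (x⁻¹ * t) * ENNReal.ofReal |x⁻¹|)
    (by fun_prop) ?_
  · refine hmix.trans (withDensity_congr_ae ?_)
    filter_upwards [Measure.ae_ne volume 0, Measure.ae_ne volume 1, Measure.ae_ne volume (-1)]
      with t ht0 ht1 ht2
    exact lintegral_cauchyPDF_inv_mul_mul_abs ht0 (by simpa [sq_eq_one_iff] using ⟨ht1, ht2⟩)
  · rw [cauchyMeasure_of_scale_ne_zero _ one_ne_zero]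
    filter_upwards [(withDensity_absolutelyContinuous _ _).ae_le (Measure.ae_ne volume 0)] with x hx
    rw [← cauchyMeasure_of_scale_ne_zero _ one_ne_zero]
    exact cauchyMeasure_map_const_mul_eq_withDensity hx

end ProbabilityTheory

theorem normal_product_ratio {Ω : Type*} [MeasurableSpace Ω] (μ : Measure Ω)
    [IsProbabilityMeasure μ] (U₁ V₁ U₂ V₂ : Ω → ℝ)
    (hU₁ : Measure.map U₁ μ = gaussianReal 0 1)
    (hV₁ : Measure.map V₁ μ = gaussianReal 0 1)
    (hU₂ : Measure.map U₂ μ = gaussianReal 0 1)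
    (hV₂ : Measure.map V₂ μ = gaussianReal 0 1)
    (hInd : iIndepFun ![U₁, V₁, U₂, V₂] μ) :
    (Measure.map (fun ω => (U₁ ω * V₁ ω) / (U₂ ω * V₂ ω)) μ =
      Measure.map (fun p : ℝ × ℝ => p.1 * p.2)
        ((volume.withDensity fun x => ENNReal.ofReal (1/(π*(1+x^2)))).prod
         (volume.withDensity fun x => ENNReal.ofReal (1/(π*(1+x^2)))))) ∧
    Measure.map (fun ω => (U₁ ω * V₁ ω) / (U₂ ω * V₂ ω)) μ =
      volume.withDensity fun t => ENNReal.ofReal ((2/π^2) * Real.log |t| / (t^2 - 1)) := by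
  have hmeas : ∀ i, AEMeasurable (![U₁, V₁, U₂, V₂] i) μ := by
    intro i
    refine .of_map_ne_zero ?_
    fin_cases i <;> simp [hU₁, hV₁, hU₂, hV₂, IsProbabilityMeasure.ne_zero]
  have hU : IndepFun U₁ U₂ μ := hInd.indepFun (by decide : (0 : Fin 4) ≠ 2)
  have hV : IndepFun V₁ V₂ μ := hInd.indepFun (by decide : (1 : Fin 4) ≠ 3)
  have hdiv : Measurable fun p : ℝ × ℝ => p.1 / p.2 := by fun_prop
  have hXY : IndepFun (fun ω => U₁ ω / U₂ ω) (fun ω => V₁ ω / V₂ ω) μ :=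
    (hInd.indepFun_prodMk_prodMk₀ hmeas 0 2 1 3 (by decide) (by decide) (by decide)
      (by decide)).comp hdiv hdiv
  have hT : μ.map (fun ω => U₁ ω * V₁ ω / (U₂ ω * V₂ ω)) =
      ((cauchyMeasure 0 1).prod (cauchyMeasure 0 1)).map (fun p => p.1 * p.2) := by
    simp_rw [← div_mul_div_comm]
    rw [hXY.map_comp_prodMk ?_ ?_ (by fun_prop : Measurable fun p : ℝ × ℝ => p.1 * p.2),
      hU.map_div_eq_cauchyMeasure hU₁ hU₂, hV.map_div_eq_cauchyMeasure hV₁ hV₂]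
    exacts [(hmeas 0).div (hmeas 2), (hmeas 1).div (hmeas 3)]
  rw [← cauchyMeasure_zero_one]
  exact ⟨hT, hT.trans cauchyMeasure_prod_map_mul⟩
end

section
/- Let X ∼ VG(m, α₁, β₁, 0) and Y ∼ VG(n, α₂, β₂, 0) be independent with m, n > −1/2 and 0 ≤ |β_i| < α_i. Then the mean of Z = X/Y is undefined: E[|Z|] = ∞. -/
open MeasureTheory ProbabilityTheory Real

/-- Modified Bessel function of the second kind. -/
noncomputable def besselK (ν x : ℝ) : ℝ :=
  ∫ t in Set.Ioi (0:ℝ), Real.exp (-x * Real.cosh t) * Real.cosh (ν * t)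

/-- Variance-gamma density with location 0. -/
noncomputable def vgPDF (m α β x : ℝ) : ℝ :=
  (Real.sqrt (α^2 - β^2)) ^ (2*m+1) / (Real.sqrt π * (2*α) ^ m * Real.Gamma (m + 1/2)) *
    Real.exp (β * x) * |x| ^ m * besselK m (α * |x|)

/-! By independence `E|X/Y| = E|X| · E|1/Y|`. The first factor is positive since the law of `X`
is nonzero and absolutely continuous. The second is infinite: `K_ν(x) ≥ c x^(-|ν|)` for small
`x > 0` (the integrand of `K_ν` is `≥ e⁻¹ cosh (ν (L - 1))` on the window `(L - 1, L]`,
`L = -log x`), so the VG density `|y|^n K_n(α|y|)` is bounded below near `0`, where `1/|y|` is not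
integrable. -/

open Set
open scoped ENNReal

lemma MeasureTheory.Measure.smul_restrict_le_withDensity {Ω : Type*} [MeasurableSpace Ω]
    (μ : Measure Ω) {f : Ω → ℝ≥0∞} {s : Set Ω} (hs : MeasurableSet s) {c : ℝ≥0∞}
    (hc : ∀ x ∈ s, c ≤ f x) : c • μ.restrict s ≤ μ.withDensity f := by
  rw [← withDensity_const, ← withDensity_indicator hs]
  exact withDensity_mono (.of_forall (Set.indicator_le hc))

lemma setLIntegral_ofReal_abs_inv_Ioo_eq_top {δ : ℝ} (hδ : 0 < δ) :
    ∫⁻ y in Ioo 0 δ, ENNReal.ofReal |y|⁻¹ = ∞ := by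
  have h : ¬ IntegrableOn (fun y : ℝ => y⁻¹) (Ioo 0 δ) := by
    rw [← intervalIntegrable_iff_integrableOn_Ioo_of_le hδ.le (by simp) (by simp),
      intervalIntegrable_inv_iff]
    simp [hδ.ne]
  contrapose! h
  refine ⟨measurable_inv.aestronglyMeasurable, ?_⟩
  simpa [HasFiniteIntegral, ← ofReal_norm, lt_top_iff_ne_top] using h

lemma lintegral_ofReal_abs_ne_zero {ν : Measure ℝ} (hν : ν ≪ volume) (hν0 : ν ≠ 0) :
    ∫⁻ x, ENNReal.ofReal |x| ∂ν ≠ 0 := by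
  rw [Ne, lintegral_eq_zero_iff (by fun_prop)]
  intro h
  refine hν0 (ae_eq_bot.1 (Filter.eventually_false_iff_eq_bot.1 ?_))
  filter_upwards [h, hν.ae_le (Measure.ae_ne volume 0)] with x hx hx0
  simp_all

lemma ProbabilityTheory.IndepFun.lintegral_ofReal_abs_div {Ω : Type*} [MeasurableSpace Ω]
    {μ : Measure Ω} {X Y : Ω → ℝ} (hXY : IndepFun X Y μ) (hX : AEMeasurable X μ)
    (hY : AEMeasurable Y μ) :
    ∫⁻ ω, ENNReal.ofReal |X ω / Y ω| ∂μ =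
      (∫⁻ x, ENNReal.ofReal |x| ∂μ.map X) * ∫⁻ y, ENNReal.ofReal |y|⁻¹ ∂μ.map Y := by
  have hφ : Measurable fun x : ℝ => ENNReal.ofReal |x| := by fun_prop
  have hψ : Measurable fun y : ℝ => ENNReal.ofReal |y|⁻¹ := by fun_prop
  simp_rw [div_eq_mul_inv, abs_mul, abs_inv, ENNReal.ofReal_mul (abs_nonneg _)]
  rw [lintegral_map' hφ.aemeasurable hX, lintegral_map' hψ.aemeasurable hY]
  exact lintegral_mul_eq_lintegral_mul_lintegral_of_indepFun'' (hφ.comp_aemeasurable hX)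
    (hψ.comp_aemeasurable hY) (hXY.comp hφ hψ)

lemma sq_div_four_le_cosh (t : ℝ) : t ^ 2 / 4 ≤ cosh t := by
  rw [← cosh_abs, cosh_eq]
  nlinarith [quadratic_le_exp_of_nonneg (abs_nonneg t), sq_abs t, abs_nonneg t, exp_pos (-|t|)]

lemma cosh_le_exp_abs (u : ℝ) : cosh u ≤ exp |u| := by
  rw [← cosh_abs, cosh_eq]
  linarith [exp_le_exp.2 (neg_le_self (abs_nonneg u))]

lemma exp_abs_div_two_le_cosh (u : ℝ) : exp |u| / 2 ≤ cosh u := by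
  rw [← cosh_abs, cosh_eq]
  linarith [exp_pos (-|u|)]

lemma besselK_integrand_le_gaussian (ν : ℝ) {x : ℝ} (hx : 0 < x) (t : ℝ) :
    exp (-x * cosh t) * cosh (ν * t) ≤ exp (2 * ν ^ 2 / x) * exp (-(x / 8) * t ^ 2) := by
  have hamgm : |ν * t| ≤ 2 * ν ^ 2 / x + x / 8 * t ^ 2 := by
    have hsq : (x * |t| - 4 * |ν|) ^ 2 / (8 * x) = 2 * ν ^ 2 / x + x / 8 * t ^ 2 - |ν * t| := by
      rw [abs_mul]; field_simp; rw [← sq_abs ν, ← sq_abs t]; ring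
    linarith [hsq ▸ div_nonneg (sq_nonneg (x * |t| - 4 * |ν|)) (by positivity : (0:ℝ) ≤ 8 * x)]
  have hcosh : x * (t ^ 2 / 4) ≤ x * cosh t :=
    mul_le_mul_of_nonneg_left (sq_div_four_le_cosh t) hx.le
  calc exp (-x * cosh t) * cosh (ν * t) ≤ exp (-x * cosh t) * exp |ν * t| :=
        mul_le_mul_of_nonneg_left (cosh_le_exp_abs _) (exp_pos _).le
    _ ≤ _ := by rw [← exp_add, ← exp_add]; exact exp_le_exp.2 (by linarith)

lemma integrableOn_besselK_integrand (ν : ℝ) {x : ℝ} (hx : 0 < x) :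
    IntegrableOn (fun t => exp (-x * cosh t) * cosh (ν * t)) (Ioi 0) := by
  refine Integrable.mono' (((integrable_exp_neg_mul_sq (by positivity : (0:ℝ) < x / 8)).const_mul
    (exp (2 * ν ^ 2 / x))).integrableOn) (by fun_prop) (.of_forall fun t => ?_)
  rw [Real.norm_of_nonneg (by positivity)]
  exact besselK_integrand_le_gaussian ν hx t

lemma exp_neg_one_mul_cosh_le_besselK (ν : ℝ) {x L : ℝ} (hx : 0 < x) (hL : 1 ≤ L)
    (hxL : x * exp L ≤ 1) : exp (-1) * cosh (ν * (L - 1)) ≤ besselK ν x := by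
  have hpt : ∀ t ∈ Ioc (L - 1) L,
      exp (-1) * cosh (ν * (L - 1)) ≤ exp (-x * cosh t) * cosh (ν * t) := by
    rintro t ⟨htl, htr⟩
    have ht0 : 0 ≤ t := by linarith
    refine mul_le_mul (exp_le_exp.2 ?_) (cosh_le_cosh.2 ?_) (cosh_pos _).le (exp_pos _).le
    · have hcosh : cosh t ≤ exp L :=
        (cosh_le_exp_abs t).trans (exp_le_exp.2 (by rwa [abs_of_nonneg ht0]))
      nlinarith [mul_le_mul_of_nonneg_left hcosh hx.le]
    · rw [abs_mul, abs_mul, abs_of_nonneg (by linarith : 0 ≤ L - 1), abs_of_nonneg ht0]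
      exact mul_le_mul_of_nonneg_left htl.le (abs_nonneg ν)
  have hsub : Ioc (L - 1) L ⊆ Ioi 0 := fun t ht => (by linarith [ht.1] : (0:ℝ) < t)
  have hint := integrableOn_besselK_integrand ν hx
  calc exp (-1) * cosh (ν * (L - 1))
      ≤ ∫ t in Ioc (L - 1) L, exp (-x * cosh t) * cosh (ν * t) := by
        simpa [measureReal_def] using setIntegral_ge_of_const_le measurableSet_Ioc
          (by simp) hpt (hint.mono_set hsub)
    _ ≤ besselK ν x :=
        setIntegral_mono_set hint (.of_forall fun t => by positivity) hsub.eventuallyLE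

lemma rpow_neg_abs_mul_le_besselK (ν : ℝ) {x : ℝ} (hx : 0 < x) (hx1 : x ≤ exp (-1)) :
    exp (-1 - |ν|) / 2 * x ^ (-|ν|) ≤ besselK ν x := by
  set L := -log x
  have hL : 1 ≤ L := by linarith [log_le_log hx hx1, log_exp (-1)]
  have hxL : x * exp L = 1 := by simp [L, exp_neg, exp_log hx, hx.ne']
  calc exp (-1 - |ν|) / 2 * x ^ (-|ν|) = exp (-1) * (exp |ν * (L - 1)| / 2) := by
        rw [abs_mul, abs_of_nonneg (by linarith : 0 ≤ L - 1), rpow_def_of_pos hx]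
        field_simp
        rw [← exp_add, ← exp_add]
        congr 1; simp only [L]; ring
    _ ≤ exp (-1) * cosh (ν * (L - 1)) :=
        mul_le_mul_of_nonneg_left (exp_abs_div_two_le_cosh _) (exp_pos _).le
    _ ≤ besselK ν x := exp_neg_one_mul_cosh_le_besselK ν hx hL hxL.le

lemma exists_pos_le_vgPDF {n α β : ℝ} (hn : -1/2 < n) (hβ : |β| < α) :
    ∃ δ > 0, ∃ c > 0, ∀ y ∈ Ioo 0 δ, c ≤ vgPDF n α β y := by
  have hα : 0 < α := (abs_nonneg β).trans_lt hβ
  set M := sqrt (α ^ 2 - β ^ 2) ^ (2 * n + 1) / (sqrt π * (2 * α) ^ n * Gamma (n + 1/2))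
  have hM : 0 < M := by
    have : 0 < α ^ 2 - β ^ 2 := by nlinarith [sq_abs β, abs_nonneg β]
    have := Gamma_pos_of_pos (by linarith : 0 < n + 1/2)
    positivity
  set C := exp (-1 - |n|) / 2 * α ^ (-|n|)
  refine ⟨min 1 (exp (-1) / α), by positivity, M * exp (-|β|) * C, by positivity, ?_⟩
  rintro y ⟨hy0, hyδ⟩
  have hy1 : y ≤ 1 := hyδ.le.trans (min_le_left _ _)
  have hαy : α * y ≤ exp (-1) := by
    have := hyδ.trans_le (min_le_right _ _)
    rw [lt_div_iff₀ hα] at this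
    linarith
  have hexp : exp (-|β|) ≤ exp (β * y) := exp_le_exp.2 <| by
    linarith [mul_le_mul_of_nonneg_right (neg_abs_le β) hy0.le,
      mul_le_of_le_one_right (abs_nonneg β) hy1]
  have hpow : C ≤ y ^ n * (exp (-1 - |n|) / 2 * (α * y) ^ (-|n|)) := by
    have h1 : 1 ≤ y ^ (n - |n|) :=
      one_le_rpow_of_pos_of_le_one_of_nonpos hy0 hy1 (by linarith [le_abs_self n])
    have h2 : y ^ (n - |n|) = y ^ n * y ^ (-|n|) := by rw [← rpow_add hy0, sub_eq_add_neg]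
    calc C ≤ C * y ^ (n - |n|) := le_mul_of_one_le_right (by positivity) h1
      _ = _ := by rw [h2, mul_rpow hα.le hy0.le]; ring
  calc M * exp (-|β|) * C
      ≤ M * exp (β * y) * (y ^ n * (exp (-1 - |n|) / 2 * (α * y) ^ (-|n|))) := by gcongr
    _ ≤ M * exp (β * y) * (y ^ n * besselK n (α * y)) := by
        gcongr
        exact rpow_neg_abs_mul_le_besselK n (by positivity) hαy
    _ = vgPDF n α β y := by simp only [vgPDF, abs_of_pos hy0, M]; ring

noncomputable def vgMeasure (m α β : ℝ) : Measure ℝ :=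
  volume.withDensity fun x => ENNReal.ofReal (vgPDF m α β x)

lemma exists_smul_restrict_Ioo_le_vgMeasure {n α β : ℝ} (hn : -1/2 < n) (hβ : |β| < α) :
    ∃ δ : ℝ, 0 < δ ∧ ∃ c : ℝ≥0∞, c ≠ 0 ∧ c • volume.restrict (Ioo 0 δ) ≤ vgMeasure n α β := by
  obtain ⟨δ, hδ, c, hc, hle⟩ := exists_pos_le_vgPDF hn hβ
  exact ⟨δ, hδ, ENNReal.ofReal c, by simpa using hc,
    volume.smul_restrict_le_withDensity measurableSet_Ioo
      fun y hy => ENNReal.ofReal_le_ofReal (hle y hy)⟩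

lemma vgMeasure_ne_zero {n α β : ℝ} (hn : -1/2 < n) (hβ : |β| < α) : vgMeasure n α β ≠ 0 := by
  obtain ⟨δ, hδ, c, hc, hle⟩ := exists_smul_restrict_Ioo_le_vgMeasure hn hβ
  intro h0
  have h := Measure.le_iff'.1 hle (Ioo 0 δ)
  simp [h0, hc, hδ.not_ge] at h

lemma lintegral_ofReal_abs_inv_vgMeasure {n α β : ℝ} (hn : -1/2 < n) (hβ : |β| < α) :
    ∫⁻ y, ENNReal.ofReal |y|⁻¹ ∂vgMeasure n α β = ∞ := by
  obtain ⟨δ, hδ, c, hc, hle⟩ := exists_smul_restrict_Ioo_le_vgMeasure hn hβ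
  refine top_le_iff.1 (le_trans ?_ (lintegral_mono' hle le_rfl))
  rw [lintegral_smul_measure, setLIntegral_ofReal_abs_inv_Ioo_eq_top hδ, smul_eq_mul,
    ENNReal.mul_top hc]

theorem vg_ratio_mean_undefined_general {Ω : Type*} [MeasurableSpace Ω] (μ : Measure Ω)
    (X Y : Ω → ℝ) (m n α₁ α₂ β₁ β₂ : ℝ)
    (hm : m > -1/2) (hn : n > -1/2) (hβ₁ : |β₁| < α₁) (hβ₂ : |β₂| < α₂)
    (hX : Measure.map X μ = volume.withDensity fun x => ENNReal.ofReal (vgPDF m α₁ β₁ x))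
    (hY : Measure.map Y μ = volume.withDensity fun y => ENNReal.ofReal (vgPDF n α₂ β₂ y))
    (hInd : IndepFun X Y μ) :
    ∫⁻ ω, ENNReal.ofReal |X ω / Y ω| ∂μ = ⊤ := by
  change μ.map X = vgMeasure m α₁ β₁ at hX
  change μ.map Y = vgMeasure n α₂ β₂ at hY
  have hXm : AEMeasurable X μ := .of_map_ne_zero (hX ▸ vgMeasure_ne_zero hm hβ₁)
  have hYm : AEMeasurable Y μ := .of_map_ne_zero (hY ▸ vgMeasure_ne_zero hn hβ₂)
  rw [hInd.lintegral_ofReal_abs_div hXm hYm, hX, hY, lintegral_ofReal_abs_inv_vgMeasure hn hβ₂]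
  exact ENNReal.mul_top (lintegral_ofReal_abs_ne_zero (withDensity_absolutelyContinuous _ _)
    (vgMeasure_ne_zero hm hβ₁))

theorem vg_ratio_mean_undefined {Ω : Type*} [MeasurableSpace Ω] (μ : Measure Ω)
    [IsProbabilityMeasure μ] (X Y : Ω → ℝ) (m n α₁ α₂ β₁ β₂ : ℝ)
    (hm : m > -1/2) (hn : n > -1/2) (hβ₁ : |β₁| < α₁) (hβ₂ : |β₂| < α₂)
    (hX : Measure.map X μ = volume.withDensity fun x => ENNReal.ofReal (vgPDF m α₁ β₁ x))
    (hY : Measure.map Y μ = volume.withDensity fun y => ENNReal.ofReal (vgPDF n α₂ β₂ y))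
    (hInd : IndepFun X Y μ) :
    ∫⁻ ω, ENNReal.ofReal |X ω / Y ω| ∂μ = ⊤ :=
  vg_ratio_mean_undefined_general μ X Y m n α₁ α₂ β₁ β₂ hm hn hβ₁ hβ₂ hX hY hInd
end

section
/- For real numbers a, b, c with c − a − b > 0 and c not a nonpositive integer, the Gaussian hypergeometric function satisfies ₂F₁(a, b; c; 1) = Γ(c)Γ(c−a−b) / (Γ(c−a)Γ(c−b)) (Gauss's summation theorem), i.e. the series Σ_{j=0}^∞ (a)_j(b)_j/((c)_j j!) converges to this value. -/
/-!
Write `F_j` for the coefficients of `₂F₁(a, b; c; 1)` and `Γ_n` for Euler's approximants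
`n^s n! / (s)_{n+1}` of `Γ(s)`. Then `F_{n+1} = Γ_n(c) / (Γ_n(a) Γ_n(b)) · n^{a+b-c} / (n + 1)`
exactly, so for `c - a - b > 0` the series converges and `n F_n → 0`. The latter makes
`c (c-a-b) F_j - (c-a)(c-b) F_j(c+1)` telescope, which gives Gauss's contiguous relation
`c (c-a-b) ₂F₁(a, b; c; 1) = (c-a)(c-b) ₂F₁(a, b; c+1; 1)`. Iterating it,
`₂F₁(a, b; c; 1) = (c-a)_n (c-b)_n / ((c)_n (c-a-b)_n) · ₂F₁(a, b; c+n; 1)` for every `n`.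
As `n → ∞` the Pochhammer quotient tends to `Γ(c) Γ(c-a-b) / (Γ(c-a) Γ(c-b))` by Euler's
limit formula, and `₂F₁(a, b; c+n; 1) → 1` by dominated convergence.
-/

open Real

/-- Ascending factorial (Pochhammer symbol). -/
noncomputable def asc (u : ℝ) (j : ℕ) : ℝ := ∏ i ∈ Finset.range j, (u + i)

open Filter Topology Asymptotics Nat

lemma asc_zero (u : ℝ) : asc u 0 = 1 := Finset.prod_range_zero _

lemma asc_succ (u : ℝ) (j : ℕ) : asc u (j + 1) = asc u j * (u + j) :=
  Finset.prod_range_succ _ _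

lemma asc_succ' (u : ℝ) (j : ℕ) : asc u (j + 1) = u * asc (u + 1) j := by
  rw [asc, Finset.prod_range_succ', asc, mul_comm]
  simp only [cast_add, cast_one, add_assoc, add_comm (1 : ℝ), cast_zero, add_zero]

lemma asc_ne_zero {u : ℝ} (hu : ∀ i : ℕ, u + i ≠ 0) (j : ℕ) : asc u j ≠ 0 :=
  Finset.prod_ne_zero_iff.2 fun i _ => hu i

lemma asc_pos {u : ℝ} (hu : 0 < u) (j : ℕ) : 0 < asc u j :=
  Finset.prod_pos fun _ _ => by positivity

lemma one_le_asc {u : ℝ} (hu : 1 ≤ u) (j : ℕ) : 1 ≤ asc u j :=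
  Finset.one_le_prod fun i _ => by linarith [(i.cast_nonneg : (0 : ℝ) ≤ i)]

lemma asc_le_asc {u v : ℝ} (hu : 0 ≤ u) (huv : u ≤ v) (j : ℕ) : asc u j ≤ asc v j :=
  Finset.prod_le_prod (fun _ _ => by positivity) fun _ _ => by linarith

lemma abs_asc_le {u K : ℝ} (hu : |u| ≤ K) (j : ℕ) : |asc u j| ≤ asc K j := by
  rw [asc, Finset.abs_prod]
  exact Finset.prod_le_prod (fun _ _ => abs_nonneg _) fun i _ =>
    (abs_add_le _ _).trans (by rw [Nat.abs_cast]; linarith)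

lemma tendsto_asc_atTop (j : ℕ) : Tendsto (fun x => asc x (j + 1)) atTop atTop := by
  refine tendsto_atTop_mono' _ ?_ tendsto_id
  filter_upwards [eventually_ge_atTop 0] with x hx
  rw [asc_succ']
  exact le_mul_of_one_le_right hx (one_le_asc (by linarith) j)

lemma asc_neg_natCast_eq_zero {m n : ℕ} (h : m < n) : asc (-m) n = 0 :=
  Finset.prod_eq_zero (Finset.mem_range.2 h) (by ring)

lemma GammaSeq_eq_div_asc (s : ℝ) (n : ℕ) :
    GammaSeq s n = (n : ℝ) ^ s * n ! / asc s (n + 1) := rfl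

-- This holds also when `asc u (n + 1) = 0`, since then `GammaSeq u n = 0 = (GammaSeq u n)⁻¹`.
lemma asc_succ_eq_inv_GammaSeq_mul (u : ℝ) {n : ℕ} (hn : n ≠ 0) :
    asc u (n + 1) = (GammaSeq u n)⁻¹ * ((n : ℝ) ^ u * n !) := by
  have : (0 : ℝ) < n := by positivity
  rw [GammaSeq_eq_div_asc, inv_div, div_mul_cancel₀ _ (by positivity)]

lemma inv_asc_succ_eq_GammaSeq_mul (u : ℝ) {n : ℕ} (hn : n ≠ 0) :
    (asc u (n + 1))⁻¹ = GammaSeq u n * ((n : ℝ) ^ u * n !)⁻¹ := by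
  rw [asc_succ_eq_inv_GammaSeq_mul u hn, mul_inv, inv_inv]

-- At a pole `s = -m` both sides are `0⁻¹ = 0`: `GammaSeq s n = 0` for `n ≥ m`.
lemma tendsto_inv_GammaSeq (s : ℝ) :
    Tendsto (fun n => (GammaSeq s n)⁻¹) atTop (𝓝 (Gamma s)⁻¹) := by
  by_cases hs : Gamma s = 0
  · obtain ⟨m, rfl⟩ := (Gamma_eq_zero_iff s).1 hs
    rw [hs, inv_zero]
    refine tendsto_const_nhds.congr' ?_
    filter_upwards [eventually_ge_atTop m] with n hn
    rw [GammaSeq_eq_div_asc, asc_neg_natCast_eq_zero (by omega), div_zero, inv_zero]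
  · exact (GammaSeq_tendsto_Gamma s).inv₀ hs

noncomputable def hypergeomCoeff (a b c : ℝ) (j : ℕ) : ℝ :=
  asc a j * asc b j / (asc c j * j !)

noncomputable def hypergeomAtOne (a b c : ℝ) : ℝ := ∑' j, hypergeomCoeff a b c j

lemma hypergeomCoeff_zero (a b c : ℝ) : hypergeomCoeff a b c 0 = 1 := by
  simp [hypergeomCoeff, asc_zero]

lemma hypergeomCoeff_succ (a b c : ℝ) {j : ℕ} (hc : ∀ i : ℕ, c + i ≠ 0) :
    hypergeomCoeff a b c (j + 1) =
      hypergeomCoeff a b c j * ((a + j) * (b + j) / ((c + j) * (j + 1))) := by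
  have := asc_ne_zero hc j
  have := hc j
  rw [hypergeomCoeff, hypergeomCoeff, asc_succ, asc_succ, asc_succ, factorial_succ]
  push_cast
  field_simp

lemma hypergeomCoeff_add_one_right (a b c : ℝ) {j : ℕ} (hc : ∀ i : ℕ, c + i ≠ 0) :
    hypergeomCoeff a b (c + 1) j = c / (c + j) * hypergeomCoeff a b c j := by
  have hasc : asc c j * (c + j) = c * asc (c + 1) j := by rw [← asc_succ, asc_succ']
  have hprod : asc c j * (c + j) ≠ 0 := mul_ne_zero (asc_ne_zero hc j) (hc j)
  have : asc (c + 1) j ≠ 0 := right_ne_zero_of_mul (hasc ▸ hprod)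
  have := asc_ne_zero hc j
  have := hc j
  rw [hypergeomCoeff, hypergeomCoeff]
  field_simp
  linear_combination (asc a j * asc b j) * hasc

lemma hypergeomCoeff_succ_eq_GammaSeq (a b c : ℝ) {n : ℕ} (hn : n ≠ 0) :
    hypergeomCoeff a b c (n + 1) = GammaSeq c n * (GammaSeq a n)⁻¹ * (GammaSeq b n)⁻¹ *
      ((n : ℝ) ^ (a + b - c) / (n + 1)) := by
  have hn' : (0 : ℝ) < n := by positivity
  have : (n ! : ℝ) ≠ 0 := by positivity
  have : (n : ℝ) ^ c ≠ 0 := by positivity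
  rw [hypergeomCoeff, div_eq_mul_inv, mul_inv, inv_asc_succ_eq_GammaSeq_mul c hn,
    asc_succ_eq_inv_GammaSeq_mul a hn, asc_succ_eq_inv_GammaSeq_mul b hn, factorial_succ,
    rpow_sub hn', rpow_add hn']
  push_cast
  field_simp

lemma isBigO_hypergeomCoeff_succ (a b c : ℝ) :
    (fun n => hypergeomCoeff a b c (n + 1)) =O[atTop]
      fun n : ℕ => (n : ℝ) ^ (a + b - c) / (n + 1) := by
  have hbdd := ((((GammaSeq_tendsto_Gamma c).mul (tendsto_inv_GammaSeq a)).mul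
    (tendsto_inv_GammaSeq b)).isBigO_one ℝ).mul
    (isBigO_refl (fun n : ℕ => (n : ℝ) ^ (a + b - c) / (n + 1)) atTop)
  simp only [one_mul] at hbdd
  refine hbdd.congr' ?_ EventuallyEq.rfl
  filter_upwards [eventually_ne_atTop 0] with n hn
  exact (hypergeomCoeff_succ_eq_GammaSeq a b c hn).symm

lemma summable_hypergeomCoeff {a b c : ℝ} (h : 0 < c - a - b) :
    Summable (hypergeomCoeff a b c) := by
  refine (summable_nat_add_iff 1).1 (summable_of_isBigO_nat ?_ (isBigO_hypergeomCoeff_succ a b c))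
  refine Summable.of_nonneg_of_le (fun n => by positivity) (fun n => ?_)
    (Real.summable_nat_rpow.2 (by linarith : a + b - c - 1 < -1))
  rcases eq_or_ne n 0 with rfl | hn
  · rw [cast_zero, zero_rpow (by linarith), zero_div]
    exact rpow_nonneg le_rfl _
  · have hn' : (0 : ℝ) < n := by positivity
    rw [rpow_sub_one hn'.ne']
    gcongr
    linarith

lemma tendsto_natCast_mul_hypergeomCoeff {a b c : ℝ} (h : 0 < c - a - b) :
    Tendsto (fun n : ℕ => n * hypergeomCoeff a b c n) atTop (𝓝 0) := by
  refine (tendsto_add_atTop_iff_nat 1).1 ?_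
  have hbig := (isBigO_refl (fun n : ℕ => ((n + 1 : ℕ) : ℝ)) atTop).mul
    (isBigO_hypergeomCoeff_succ a b c)
  refine hbig.trans_tendsto (Tendsto.congr (fun n => ?_) ((tendsto_rpow_neg_atTop
    (by linarith : 0 < c - a - b)).comp tendsto_natCast_atTop_atTop))
  simp only [Function.comp_apply, neg_sub, cast_add, cast_one]
  field_simp
  ring_nf

lemma hypergeomCoeff_contiguous_eq_sub (a b c : ℝ) (hc : ∀ i : ℕ, c + i ≠ 0) (j : ℕ) :
    c * (c - a - b) * hypergeomCoeff a b c j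
        - (c - a) * (c - b) * hypergeomCoeff a b (c + 1) j =
      c * j * hypergeomCoeff a b c j
        - c * ((j + 1 : ℕ) : ℝ) * hypergeomCoeff a b c (j + 1) := by
  have := hc j
  rw [hypergeomCoeff_add_one_right a b c hc, hypergeomCoeff_succ a b c hc]
  push_cast
  field_simp
  ring

lemma hypergeomAtOne_contiguous {a b c : ℝ} (h : 0 < c - a - b) (hc : ∀ i : ℕ, c + i ≠ 0) :
    c * (c - a - b) * hypergeomAtOne a b c =
      (c - a) * (c - b) * hypergeomAtOne a b (c + 1) := by
  have hs₁ := (summable_hypergeomCoeff h).mul_left (c * (c - a - b))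
  have hs₂ := (summable_hypergeomCoeff (by linarith : 0 < c + 1 - a - b)).mul_left
    ((c - a) * (c - b))
  have htel : Tendsto (fun n => ∑ j ∈ Finset.range n,
      (c * (c - a - b) * hypergeomCoeff a b c j
        - (c - a) * (c - b) * hypergeomCoeff a b (c + 1) j)) atTop (𝓝 0) := by
    simp_rw [hypergeomCoeff_contiguous_eq_sub a b c hc, mul_assoc c, Finset.sum_range_sub'
      (fun j => c * (j * hypergeomCoeff a b c j))]
    simpa using ((tendsto_natCast_mul_hypergeomCoeff h).const_mul c).neg
  rw [← sub_eq_zero, hypergeomAtOne, hypergeomAtOne, ← tsum_mul_left, ← tsum_mul_left,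
    ← hs₁.tsum_sub hs₂]
  exact ((hs₁.sub hs₂).hasSum_iff_tendsto_nat.2 htel).tsum_eq

lemma asc_mul_asc_mul_hypergeomAtOne {a b c : ℝ} (h : 0 < c - a - b) (hc : ∀ i : ℕ, c + i ≠ 0)
    (n : ℕ) : asc c n * asc (c - a - b) n * hypergeomAtOne a b c =
      asc (c - a) n * asc (c - b) n * hypergeomAtOne a b (c + n) := by
  induction n with
  | zero => simp [asc_zero]
  | succ n ih =>
    have hcn : ∀ i : ℕ, c + n + i ≠ 0 := fun i => by simpa [add_assoc] using hc (n + i)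
    have hcontig := hypergeomAtOne_contiguous (a := a) (b := b)
      (by linarith [n.cast_nonneg (α := ℝ)]) hcn
    rw [asc_succ, asc_succ, asc_succ, asc_succ, cast_succ, ← add_assoc]
    linear_combination
      (c + n) * (c - a - b + n) * ih + asc (c - a) n * asc (c - b) n * hcontig

lemma abs_hypergeomCoeff_le {a b x x₀ K : ℝ} (ha : |a| ≤ K) (hb : |b| ≤ K) (hx₀ : 0 < x₀)
    (hx : x₀ ≤ x) (j : ℕ) : |hypergeomCoeff a b x j| ≤ hypergeomCoeff K K x₀ j := by
  rw [hypergeomCoeff, abs_div, abs_mul, abs_mul, abs_of_pos (asc_pos (hx₀.trans_le hx) j),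
    Nat.abs_cast]
  have hKj : 0 ≤ asc K j := (abs_nonneg _).trans (abs_asc_le ha j)
  have hfac : (0 : ℝ) < j ! := by positivity
  exact div_le_div₀ (mul_nonneg hKj hKj) (mul_le_mul (abs_asc_le ha j) (abs_asc_le hb j)
    (abs_nonneg _) hKj) (mul_pos (asc_pos hx₀ j) hfac)
    (mul_le_mul_of_nonneg_right (asc_le_asc hx₀.le hx j) hfac.le)

lemma tendsto_hypergeomCoeff_atTop (a b : ℝ) (j : ℕ) :
    Tendsto (fun x => hypergeomCoeff a b x j) atTop (𝓝 (if j = 0 then 1 else 0)) := by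
  rcases j with _ | j
  · simp [hypergeomCoeff_zero]
  · simp only [succ_ne_zero, if_false]
    have := ((tendsto_asc_atTop j).inv_tendsto_atTop).const_mul
      (asc a (j + 1) * asc b (j + 1) / (j + 1)!)
    rw [mul_zero] at this
    refine this.congr fun x => ?_
    rw [hypergeomCoeff, Pi.inv_apply]
    ring

-- Tannery's theorem, with the coefficients of `₂F₁(K, K; c + n₀; 1)` as dominating series.
lemma tendsto_hypergeomAtOne_add_nat (a b c : ℝ) :
    Tendsto (fun n : ℕ => hypergeomAtOne a b (c + n)) atTop (𝓝 1) := by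
  set K := max |a| |b|
  obtain ⟨n₀, hn₀⟩ := exists_nat_gt (K + K - c)
  have hK : 0 ≤ K := (abs_nonneg a).trans (le_max_left _ _)
  have hx₀ : 0 < c + n₀ := by linarith
  have hc_n : Tendsto (fun n : ℕ => c + n) atTop atTop :=
    tendsto_atTop_add_const_left _ c tendsto_natCast_atTop_atTop
  rw [← tsum_ite_eq 0 (fun _ => (1 : ℝ))]
  refine tendsto_tsum_of_dominated_convergence
    (summable_hypergeomCoeff (by linarith : 0 < c + n₀ - K - K))
    (fun j => (tendsto_hypergeomCoeff_atTop a b j).comp hc_n) ?_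
  filter_upwards [eventually_ge_atTop n₀] with n hn j
  exact abs_hypergeomCoeff_le (le_max_left _ _) (le_max_right _ _) hx₀
    (by simpa using (cast_le.2 hn : (n₀ : ℝ) ≤ n)) j

lemma tendsto_asc_mul_asc_div (x y z w : ℝ) (h : x + y = z + w) :
    Tendsto (fun n => asc z n * asc w n / (asc x n * asc y n)) atTop
      (𝓝 (Gamma x * Gamma y / (Gamma z * Gamma w))) := by
  refine (tendsto_add_atTop_iff_nat 1).1 ?_
  have hlim := (((GammaSeq_tendsto_Gamma x).mul (GammaSeq_tendsto_Gamma y)).mul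
    ((tendsto_inv_GammaSeq z).mul (tendsto_inv_GammaSeq w)))
  rw [← mul_inv, ← div_eq_mul_inv] at hlim
  refine hlim.congr' ?_
  filter_upwards [eventually_ne_atTop 0] with n hn
  have hn' : (0 : ℝ) < n := by positivity
  have : (n ! : ℝ) ≠ 0 := by positivity
  have hpow : (n : ℝ) ^ z * (n : ℝ) ^ w = (n : ℝ) ^ x * (n : ℝ) ^ y := by
    rw [← rpow_add hn', ← rpow_add hn', h]
  rw [div_eq_mul_inv, mul_inv, inv_asc_succ_eq_GammaSeq_mul x hn,
    inv_asc_succ_eq_GammaSeq_mul y hn, asc_succ_eq_inv_GammaSeq_mul z hn,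
    asc_succ_eq_inv_GammaSeq_mul w hn]
  have : (n : ℝ) ^ x ≠ 0 := by positivity
  have : (n : ℝ) ^ y ≠ 0 := by positivity
  field_simp
  linear_combination
    -(GammaSeq x n * GammaSeq y n * (GammaSeq z n)⁻¹ * (GammaSeq w n)⁻¹) * hpow

theorem gauss_summation (a b c : ℝ) (h : c - a - b > 0) (hc : ∀ j : ℕ, c ≠ -(j : ℝ)) :
    HasSum (fun j : ℕ => asc a j * asc b j / (asc c j * (Nat.factorial j : ℝ)))
      (Real.Gamma c * Real.Gamma (c-a-b) / (Real.Gamma (c-a) * Real.Gamma (c-b))) := by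
  have hc' : ∀ i : ℕ, c + i ≠ 0 := fun i hi => hc i (eq_neg_of_add_eq_zero_left hi)
  have hF : ∀ n : ℕ, hypergeomAtOne a b c =
      asc (c - a) n * asc (c - b) n / (asc c n * asc (c - a - b) n) *
        hypergeomAtOne a b (c + n) := by
    intro n
    have := asc_ne_zero hc' n
    have := (asc_pos h n).ne'
    field_simp
    linear_combination asc_mul_asc_mul_hypergeomAtOne h hc' n
  have hlim := (tendsto_asc_mul_asc_div c (c - a - b) (c - a) (c - b) (by ring)).mul
    (tendsto_hypergeomAtOne_add_nat a b c)
  rw [mul_one] at hlim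
  have hval := tendsto_nhds_unique (tendsto_const_nhds.congr hF) hlim
  exact hval ▸ (summable_hypergeomCoeff h).hasSum
end

section
/- Let (U, V) be a bivariate normal random vector with mean zero, variances σ_U², σ_V², and correlation coefficient ρ with |ρ| < 1. Then the product W = UV follows the variance-gamma distribution VG(0, 1/(s(1−ρ²)), ρ/(s(1−ρ²)), 0) where s = σ_U σ_V; that is, W has density f_W(x) = (1/(π s √(1−ρ²))) exp(ρx/(s(1−ρ²))) K₀(|x|/(s(1−ρ²))). -/
open MeasureTheory Real

/-!
By Tonelli and the substitution v = x/u on each vertical line, the product of a pair with joint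
density f has density x ↦ ∫ f(u, x/u) |u|⁻¹ du. For the bivariate normal density the exponent
at (u, x/u) splits as ρx/(s(1-ρ²)) - z(u²/c² + c²/u²) with s = σ_U σ_V, z = |x|/(2s(1-ρ²)) and
c² = |x|σ_U/σ_V, and the substitution u = c e^{t/2} turns ∫ e^{-z(u²/c² + c²/u²)} du/|u| into
∫_ℝ e^{-2z cosh t} dt = 2K₀(2z).
-/

open Set
open scoped ENNReal

lemma Real.lintegral_comp_mul_left (g : ℝ → ℝ≥0∞) {a : ℝ} (ha : a ≠ 0) :
    ∫⁻ x, g (a * x) = ENNReal.ofReal |a⁻¹| * ∫⁻ x, g x := by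
  rw [← (measurableEmbedding_mulLeft₀ ha).lintegral_map, Real.map_volume_mul_left ha,
    lintegral_smul_measure, smul_eq_mul]

lemma lintegral_mul_comp_mul {f : ℝ × ℝ → ℝ≥0∞} {g : ℝ → ℝ≥0∞} (hf : Measurable f)
    (hg : Measurable g) :
    ∫⁻ p, f p * g (p.1 * p.2) = ∫⁻ x, (∫⁻ u, ENNReal.ofReal |u⁻¹| * f (u, x / u)) * g x := by
  have inner : ∀ᵐ u : ℝ, ∫⁻ v, f (u, v) * g (u * v) =
      ∫⁻ x, ENNReal.ofReal |u⁻¹| * f (u, x / u) * g x := by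
    filter_upwards [compl_mem_ae_iff.2 (measure_singleton (0:ℝ))] with u (hu : u ≠ 0)
    simp_rw [mul_assoc, lintegral_const_mul' _ _ ENNReal.ofReal_ne_top,
      ← Real.lintegral_comp_mul_left _ hu, mul_div_cancel_left₀ _ hu]
  rw [Measure.volume_eq_prod, lintegral_prod _ (by fun_prop), lintegral_congr_ae inner,
    lintegral_lintegral_swap (by fun_prop)]
  exact lintegral_congr fun x => lintegral_mul_const _ (by fun_prop)

theorem map_mul_withDensity {f : ℝ × ℝ → ℝ≥0∞} (hf : Measurable f) :
    (volume.withDensity f).map (fun p : ℝ × ℝ => p.1 * p.2) =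
      volume.withDensity fun x => ∫⁻ u, ENNReal.ofReal |u⁻¹| * f (u, x / u) := by
  ext s hs
  have hind : Measurable (s.indicator 1 : ℝ → ℝ≥0∞) := measurable_one.indicator hs
  rw [← lintegral_indicator_one hs, ← lintegral_indicator_one hs, lintegral_map hind (by fun_prop),
    lintegral_withDensity_eq_lintegral_mul _ hf (g := fun p => s.indicator 1 (p.1 * p.2))
      (hind.comp (by fun_prop)),
    lintegral_withDensity_eq_lintegral_mul _ (by fun_prop) hind]
  exact lintegral_mul_comp_mul hf hind

lemma integrableOn_exp_neg_mul_cosh {z : ℝ} (hz : 0 < z) :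
    IntegrableOn (fun t => exp (-z * cosh t)) (Ioi 0) := by
  refine (exp_neg_integrableOn_Ioi 0 hz).mono' (by fun_prop) ?_
  filter_upwards [ae_restrict_mem measurableSet_Ioi] with t (ht : 0 < t)
  rw [norm_of_nonneg (exp_pos _).le, exp_le_exp]
  have : t ≤ cosh t := (self_le_sinh_iff.2 ht.le).trans (sinh_lt_cosh (x := t)).le
  nlinarith

lemma ofReal_besselK_zero {z : ℝ} (hz : 0 < z) :
    ENNReal.ofReal (besselK 0 z) = ∫⁻ t in Ioi 0, ENNReal.ofReal (exp (-z * cosh t)) := by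
  simp only [besselK, zero_mul, cosh_zero, mul_one]
  exact ofReal_integral_eq_lintegral_ofReal (integrableOn_exp_neg_mul_cosh hz)
    (ae_of_all _ fun _ => (exp_pos _).le)

lemma lintegral_eq_two_mul_setLIntegral_Ioi_of_even {g : ℝ → ℝ≥0∞} (hg : ∀ t, g (-t) = g t) :
    ∫⁻ t, g t = 2 * ∫⁻ t in Ioi 0, g t := by
  have hIio : ∫⁻ t in Iio 0, g t = ∫⁻ t in Ioi 0, g t := by
    simpa [hg] using
      (Measure.measurePreserving_neg (volume : Measure ℝ)).setLIntegral_comp_preimage_emb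
        measurableEmbedding_neg g (Ioi 0)
  rw [← lintegral_add_compl g measurableSet_Iio, compl_Iio, hIio,
    setLIntegral_congr Ioi_ae_eq_Ici.symm, two_mul]

lemma setLIntegral_Ioi_exp_neg_mul_div_eq_besselK {z c : ℝ} (hz : 0 < z) (hc : 0 < c) :
    ∫⁻ u in Ioi 0, ENNReal.ofReal (exp (-z * (u ^ 2 / c ^ 2 + c ^ 2 / u ^ 2)) / u) =
      ENNReal.ofReal (besselK 0 (2 * z)) := by
  set φ : ℝ → ℝ := fun t => c * exp (t / 2)
  have hφ_deriv (t : ℝ) : HasDerivAt φ (φ t / 2) t :=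
    (((hasDerivAt_id' t).div_const 2).exp.const_mul c).congr_deriv (by ring)
  have hφ_sq (t : ℝ) : φ t ^ 2 = c ^ 2 * exp t := by
    rw [mul_pow, ← exp_nat_mul]
    ring_nf
  have hφ_image : φ '' univ = Ioi 0 := by
    refine (image_univ).trans (Set.ext fun u => ⟨?_, fun hu => ⟨2 * log (u / c), ?_⟩⟩)
    · rintro ⟨t, rfl⟩; exact mul_pos hc (exp_pos _)
    · simp only [φ]
      rw [mul_div_cancel_left₀ _ (two_ne_zero (α := ℝ)), exp_log (div_pos hu hc)]
      field_simp
  have hφ_inj : InjOn φ univ := fun s _ t _ h => by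
    simpa using exp_injective (mul_left_cancel₀ hc.ne' h)
  have hintegrand (t : ℝ) :
      ENNReal.ofReal |φ t / 2| *
          ENNReal.ofReal (exp (-z * (φ t ^ 2 / c ^ 2 + c ^ 2 / φ t ^ 2)) / φ t) =
        2⁻¹ * ENNReal.ofReal (exp (-(2 * z) * cosh t)) := by
    have hφ_pos : 0 < φ t := mul_pos hc (exp_pos _)
    rw [← ENNReal.ofReal_mul (abs_nonneg _), ← ENNReal.ofReal_ofNat 2,
      ← ENNReal.ofReal_inv_of_pos two_pos, ← ENNReal.ofReal_mul (by norm_num),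
      abs_of_pos (half_pos hφ_pos), hφ_sq, cosh_eq, exp_neg]
    congr 1
    field_simp
  rw [← hφ_image, lintegral_image_eq_lintegral_abs_deriv_mul MeasurableSet.univ
    (fun t _ => (hφ_deriv t).hasDerivWithinAt) hφ_inj, setLIntegral_univ]
  simp_rw [hintegrand]
  rw [lintegral_const_mul' _ _ (by simp),
    lintegral_eq_two_mul_setLIntegral_Ioi_of_even (fun t => by rw [cosh_neg]),
    ← ofReal_besselK_zero (by positivity), ← mul_assoc,
    ENNReal.inv_mul_cancel (by norm_num) (by norm_num), one_mul]

lemma lintegral_exp_neg_mul_div_abs_eq_besselK {z c : ℝ} (hz : 0 < z) (hc : 0 < c) :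
    ∫⁻ u, ENNReal.ofReal (exp (-z * (u ^ 2 / c ^ 2 + c ^ 2 / u ^ 2)) / |u|) =
      2 * ENNReal.ofReal (besselK 0 (2 * z)) := by
  rw [lintegral_eq_two_mul_setLIntegral_Ioi_of_even (fun u => by simp),
    ← setLIntegral_Ioi_exp_neg_mul_div_eq_besselK hz hc]
  congr 1
  exact setLIntegral_congr_fun measurableSet_Ioi fun u (hu : 0 < u) => by rw [abs_of_pos hu]

lemma lintegral_abs_inv_mul_bivariate_normal_density_eq {σU σV ρ x : ℝ} (hσU : 0 < σU)
    (hσV : 0 < σV) (hρ : |ρ| < 1) (hx : x ≠ 0) :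
    ∫⁻ u, ENNReal.ofReal |u⁻¹| * ENNReal.ofReal
        (1/(2*π*σU*σV*Real.sqrt (1-ρ^2)) *
          Real.exp (-(u^2/σU^2 - 2*ρ*u*(x/u)/(σU*σV) + (x/u)^2/σV^2)/(2*(1-ρ^2)))) =
      ENNReal.ofReal (1/(π*(σU*σV)*Real.sqrt (1-ρ^2)) * Real.exp (ρ*x/((σU*σV)*(1-ρ^2))) *
          besselK 0 (|x|/((σU*σV)*(1-ρ^2)))) := by
  have hr : 0 < 1 - ρ ^ 2 := by nlinarith [abs_lt.1 hρ]
  set z := |x| / (2 * (σU * σV) * (1 - ρ ^ 2))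
  set c := √(|x| * σU / σV)
  have hc : c ^ 2 = |x| * σU / σV := sq_sqrt (by positivity)
  set K := 1/(2*π*σU*σV*Real.sqrt (1-ρ^2)) * Real.exp (ρ*x/((σU*σV)*(1-ρ^2)))
  have hintegrand : ∀ᵐ u : ℝ, ENNReal.ofReal |u⁻¹| * ENNReal.ofReal
        (1/(2*π*σU*σV*Real.sqrt (1-ρ^2)) *
          Real.exp (-(u^2/σU^2 - 2*ρ*u*(x/u)/(σU*σV) + (x/u)^2/σV^2)/(2*(1-ρ^2)))) =
      ENNReal.ofReal K * ENNReal.ofReal (exp (-z * (u ^ 2 / c ^ 2 + c ^ 2 / u ^ 2)) / |u|) := by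
    filter_upwards [compl_mem_ae_iff.2 (measure_singleton (0:ℝ))] with u (hu : u ≠ 0)
    rw [← ENNReal.ofReal_mul (abs_nonneg _), ← ENNReal.ofReal_mul (by positivity)]
    congr 1
    have hexp : -(u^2/σU^2 - 2*ρ*u*(x/u)/(σU*σV) + (x/u)^2/σV^2)/(2*(1-ρ^2)) =
        ρ*x/((σU*σV)*(1-ρ^2)) + -z * (u ^ 2 / c ^ 2 + c ^ 2 / u ^ 2) := by
      rw [hc, div_pow x u, ← sq_abs x]
      simp only [z]
      field_simp
      ring
    rw [hexp, exp_add, abs_inv]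
    simp only [K]
    field_simp
  rw [lintegral_congr_ae hintegrand, lintegral_const_mul' _ _ ENNReal.ofReal_ne_top,
    lintegral_exp_neg_mul_div_abs_eq_besselK (by positivity) (by positivity)]
  have h2z : 2 * z = |x| / ((σU * σV) * (1 - ρ ^ 2)) := by
    simp only [z]; field_simp
  rw [h2z, ← ENNReal.ofReal_ofNat 2, ← ENNReal.ofReal_mul zero_le_two,
    ← ENNReal.ofReal_mul (by positivity)]
  congr 1
  simp only [K]
  field_simp

theorem product_of_correlated_normals_is_vg_general {Ω : Type*} [MeasurableSpace Ω] (μ : Measure Ω)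
    (U V : Ω → ℝ) (σU σV ρ : ℝ)
    (hσU : 0 < σU) (hσV : 0 < σV) (hρ : |ρ| < 1)
    (hUV : Measure.map (fun ω => (U ω, V ω)) μ =
      (volume : Measure (ℝ × ℝ)).withDensity fun p => ENNReal.ofReal
        (1/(2*π*σU*σV*Real.sqrt (1-ρ^2)) *
          Real.exp (-(p.1^2/σU^2 - 2*ρ*p.1*p.2/(σU*σV) + p.2^2/σV^2)/(2*(1-ρ^2))))) :
    Measure.map (fun ω => U ω * V ω) μ =
      volume.withDensity fun x => ENNReal.ofReal
        (1/(π*(σU*σV)*Real.sqrt (1-ρ^2)) * Real.exp (ρ*x/((σU*σV)*(1-ρ^2))) *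
          besselK 0 (|x|/((σU*σV)*(1-ρ^2)))) := by
  have hsqrt : 0 < √(1 - ρ ^ 2) := sqrt_pos.2 (by nlinarith [abs_lt.1 hρ])
  have hpair : AEMeasurable (fun ω => (U ω, V ω)) μ := by
    refine AEMeasurable.of_map_ne_zero ?_
    rw [hUV, Ne, withDensity_eq_zero_iff (by fun_prop)]
    intro h
    obtain ⟨p, hp⟩ := h.exists
    exact (ENNReal.ofReal_pos.2 (by positivity)).ne' hp
  calc μ.map (fun ω => U ω * V ω)
      = (μ.map fun ω => (U ω, V ω)).map (fun p : ℝ × ℝ => p.1 * p.2) :=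
        (AEMeasurable.map_map_of_aemeasurable (g := fun p : ℝ × ℝ => p.1 * p.2) (by fun_prop)
          hpair).symm
    _ = _ := by
      rw [hUV, map_mul_withDensity (by fun_prop)]
      refine withDensity_congr_ae ?_
      filter_upwards [compl_mem_ae_iff.2 (measure_singleton (0:ℝ))] with x (hx : x ≠ 0)
      exact lintegral_abs_inv_mul_bivariate_normal_density_eq hσU hσV hρ hx

theorem product_of_correlated_normals_is_vg {Ω : Type*} [MeasurableSpace Ω] (μ : Measure Ω)
    [IsProbabilityMeasure μ] (U V : Ω → ℝ) (σU σV ρ : ℝ)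
    (hσU : 0 < σU) (hσV : 0 < σV) (hρ : |ρ| < 1)
    (hUV : Measure.map (fun ω => (U ω, V ω)) μ =
      (volume : Measure (ℝ × ℝ)).withDensity fun p => ENNReal.ofReal
        (1/(2*π*σU*σV*Real.sqrt (1-ρ^2)) *
          Real.exp (-(p.1^2/σU^2 - 2*ρ*p.1*p.2/(σU*σV) + p.2^2/σV^2)/(2*(1-ρ^2))))) :
    Measure.map (fun ω => U ω * V ω) μ =
      volume.withDensity fun x => ENNReal.ofReal
        (1/(π*(σU*σV)*Real.sqrt (1-ρ^2)) * Real.exp (ρ*x/((σU*σV)*(1-ρ^2))) *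
          besselK 0 (|x|/((σU*σV)*(1-ρ^2)))) :=
  product_of_correlated_normals_is_vg_general μ U V σU σV ρ hσU hσV hρ hUV
end

section
/- Let X₁ and X₂ be independent random variables, each with the asymmetric Laplace density f_i(x) = (γ_i²/(2α_i)) e^{β_i x − α_i |x|} (i.e. X_i ∼ VG(1/2, α_i, β_i, 0)), where 0 ≤ |β_i| < α_i and γ_i² = α_i² − β_i². Then the density of Z = X₁/X₂ is f_Z(z) = (γ₁² γ₂² / (4 α₁ α₂)) · (1/u₁² + 1/u₂²), where u₁ = α₁|z| + α₂ + β₁z + β₂ and u₂ = α₁|z| + α₂ − β₁z − β₂. -/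
/-! The density of `X₁ / X₂` is `∫ |y| f₁(yz) f₂(y) dy`, by the substitution `x = yz` in the
inner integral of the joint law. For `y > 0` the integrand is `γ₁²γ₂²/(4α₁α₂) · y e^{-u₂ y}`,
whose integral is `γ₁²γ₂²/(4α₁α₂u₂²)`; the half-line `y < 0` is the same computation with
both `βᵢ` negated, which exchanges `u₂` and `u₁`. -/

open MeasureTheory ProbabilityTheory Real Set
open scoped ENNReal

noncomputable section

lemma lintegral_eq_lintegral_Ioi_add_lintegral_Ioi_neg (g : ℝ → ℝ≥0∞) :
    ∫⁻ y, g y = (∫⁻ y in Ioi 0, g y) + ∫⁻ y in Ioi 0, g (-y) := by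
  have hneg : ∫⁻ y in Ioi 0, g (-y) = ∫⁻ y in Iio 0, g y := by
    simpa using (Measure.measurePreserving_neg (volume : Measure ℝ)).setLIntegral_comp_preimage_emb
      (Homeomorph.neg ℝ).measurableEmbedding g (Iio 0)
  rw [hneg, add_comm,
    ← lintegral_union measurableSet_Ioi ((Iio_disjoint_Ici le_rfl).mono_right Ioi_subset_Ici_self),
    Iio_union_Ioi, restrict_compl_singleton]

lemma lintegral_Ioi_mul_exp_neg_mul {u : ℝ} (hu : 0 < u) :
    ∫⁻ y in Ioi 0, ENNReal.ofReal (y * exp (-(u * y))) = ENNReal.ofReal (1 / u ^ 2) := by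
  have hint : ∫ y in Ioi 0, y * exp (-(u * y)) = 1 / u ^ 2 := by
    have h := integral_rpow_mul_exp_neg_mul_Ioi (a := 2) two_pos hu
    norm_num [Real.Gamma_two] at h
    simpa using h
  rw [← ofReal_integral_eq_lintegral_ofReal, hint]
  · exact .of_integral_ne_zero (by rw [hint]; positivity)
  · filter_upwards [self_mem_ae_restrict measurableSet_Ioi] with y (hy : 0 < y)
    positivity

def ratioDensity (f₁ f₂ : ℝ → ℝ≥0∞) (z : ℝ) : ℝ≥0∞ :=
  ∫⁻ y, ENNReal.ofReal |y| * f₁ (y * z) * f₂ y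

lemma withDensity_preimage_div_const {f : ℝ → ℝ≥0∞} (hf : Measurable f) {y : ℝ} (hy : y ≠ 0)
    {s : Set ℝ} (hs : MeasurableSet s) :
    volume.withDensity f ((· / y) ⁻¹' s) = ∫⁻ t in s, ENNReal.ofReal |y| * f (y * t) := by
  have hpre : (y * ·) ⁻¹' ((· / y) ⁻¹' s) = s := by
    ext t
    simp [mul_div_cancel_left₀ _ hy]
  rw [withDensity_apply _ (measurable_div_const y hs)]
  conv_lhs => rw [← Real.smul_map_volume_mul_left hy]
  rw [Measure.restrict_smul, lintegral_smul_measure,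
    Measure.restrict_map (measurable_const_mul y) (measurable_div_const y hs),
    lintegral_map hf (measurable_const_mul y), hpre, lintegral_const_mul' _ _ ENNReal.ofReal_ne_top,
    smul_eq_mul]

lemma map_div_prod_withDensity {f₁ f₂ : ℝ → ℝ≥0∞} (hf₁ : Measurable f₁) (hf₂ : Measurable f₂) :
    ((volume.withDensity f₁).prod (volume.withDensity f₂)).map (fun p => p.1 / p.2) =
      volume.withDensity (ratioDensity f₁ f₂) := by
  have hdiv : Measurable fun p : ℝ × ℝ => p.1 / p.2 := measurable_fst.div measurable_snd
  ext s hs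
  rw [Measure.map_apply hdiv hs, Measure.prod_apply_symm (hdiv hs),
    lintegral_withDensity_eq_lintegral_mul _ hf₂ (measurable_measure_prodMk_right (hdiv hs)),
    withDensity_apply _ hs]
  calc ∫⁻ y, (f₂ * fun y => volume.withDensity f₁ ((· / y) ⁻¹' s)) y
      = ∫⁻ y, ∫⁻ t in s, ENNReal.ofReal |y| * f₁ (y * t) * f₂ y := by
        refine lintegral_congr_ae ?_
        filter_upwards [Measure.ae_ne volume 0] with y hy
        rw [Pi.mul_apply, withDensity_preimage_div_const hf₁ hy hs, mul_comm,
          ← lintegral_mul_const _ (by fun_prop)]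
    _ = ∫⁻ t in s, ratioDensity f₁ f₂ t :=
        lintegral_lintegral_swap (by fun_prop)

lemma sq_sub_sq_pos_of_abs_lt {α β : ℝ} (h : |β| < α) : 0 < α ^ 2 - β ^ 2 :=
  sub_pos.2 (sq_lt_sq' (neg_lt_of_abs_lt h) (lt_of_abs_lt h))

lemma sq_sub_sq_mul_sq_sub_sq_div_nonneg {α₁ α₂ β₁ β₂ : ℝ} (hβ₁ : |β₁| < α₁) (hβ₂ : |β₂| < α₂) :
    0 ≤ (α₁ ^ 2 - β₁ ^ 2) * (α₂ ^ 2 - β₂ ^ 2) / (4 * α₁ * α₂) := by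
  have := (abs_nonneg β₁).trans_lt hβ₁
  have := (abs_nonneg β₂).trans_lt hβ₂
  have := sq_sub_sq_pos_of_abs_lt hβ₁
  have := sq_sub_sq_pos_of_abs_lt hβ₂
  positivity

/-- The density of `VG(1/2, α, β, 0)`. -/
def asymLaplacePDFReal (α β x : ℝ) : ℝ :=
  (α ^ 2 - β ^ 2) / (2 * α) * exp (β * x - α * |x|)

lemma measurable_asymLaplacePDFReal (α β : ℝ) : Measurable (asymLaplacePDFReal α β) := by
  unfold asymLaplacePDFReal
  fun_prop

lemma asymLaplacePDFReal_neg (α β x : ℝ) :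
    asymLaplacePDFReal α β (-x) = asymLaplacePDFReal α (-β) x := by
  simp only [asymLaplacePDFReal, neg_sq, abs_neg, mul_neg, neg_mul]

lemma asymLaplacePDFReal_pos {α β : ℝ} (h : |β| < α) (x : ℝ) : 0 < asymLaplacePDFReal α β x := by
  have := (abs_nonneg β).trans_lt h
  have := sq_sub_sq_pos_of_abs_lt h
  unfold asymLaplacePDFReal
  positivity

lemma withDensity_asymLaplacePDFReal_ne_zero {α β : ℝ} (h : |β| < α) :
    volume.withDensity (fun x => ENNReal.ofReal (asymLaplacePDFReal α β x)) ≠ 0 := by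
  rw [Ne, withDensity_eq_zero_iff (measurable_asymLaplacePDFReal α β).ennreal_ofReal.aemeasurable]
  intro h0
  obtain ⟨x, hx⟩ := h0.exists
  exact (asymLaplacePDFReal_pos h x).not_ge (ENNReal.ofReal_eq_zero.1 hx)

lemma asymLaplacePDFReal_mul_asymLaplacePDFReal {y : ℝ} (hy : 0 ≤ y) (α₁ α₂ β₁ β₂ z : ℝ) :
    asymLaplacePDFReal α₁ β₁ (y * z) * asymLaplacePDFReal α₂ β₂ y =
      (α₁ ^ 2 - β₁ ^ 2) * (α₂ ^ 2 - β₂ ^ 2) / (4 * α₁ * α₂) *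
        exp (-((α₁ * |z| + α₂ - β₁ * z - β₂) * y)) := by
  simp only [asymLaplacePDFReal, abs_mul, abs_of_nonneg hy]
  rw [mul_mul_mul_comm, ← exp_add]
  congr 1
  · field_simp; ring
  · exact congrArg exp (by ring)

lemma lintegral_Ioi_asymLaplacePDFReal {α₁ α₂ β₁ β₂ : ℝ} (hβ₁ : |β₁| < α₁) (hβ₂ : |β₂| < α₂)
    (z : ℝ) :
    ∫⁻ y in Ioi 0, ENNReal.ofReal |y| * ENNReal.ofReal (asymLaplacePDFReal α₁ β₁ (y * z)) *
        ENNReal.ofReal (asymLaplacePDFReal α₂ β₂ y) =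
      ENNReal.ofReal ((α₁ ^ 2 - β₁ ^ 2) * (α₂ ^ 2 - β₂ ^ 2) / (4 * α₁ * α₂) *
        (1 / (α₁ * |z| + α₂ - β₁ * z - β₂) ^ 2)) := by
  have hc := sq_sub_sq_mul_sq_sub_sq_div_nonneg hβ₁ hβ₂
  have hu : 0 < α₁ * |z| + α₂ - β₁ * z - β₂ := by
    have : |β₁ * z| ≤ α₁ * |z| := abs_mul β₁ z ▸ mul_le_mul_of_nonneg_right hβ₁.le (abs_nonneg z)
    linarith [le_abs_self (β₁ * z), le_abs_self β₂]
  rw [ENNReal.ofReal_mul hc, ← lintegral_Ioi_mul_exp_neg_mul hu,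
    ← lintegral_const_mul' _ _ ENNReal.ofReal_ne_top]
  refine setLIntegral_congr_fun measurableSet_Ioi fun y (hy : 0 < y) => ?_
  rw [mul_assoc, ← ENNReal.ofReal_mul (asymLaplacePDFReal_pos hβ₁ _).le,
    asymLaplacePDFReal_mul_asymLaplacePDFReal hy.le, ← ENNReal.ofReal_mul (abs_nonneg y),
    ← ENNReal.ofReal_mul hc, abs_of_pos hy]
  ring_nf

lemma ratioDensity_asymLaplacePDFReal {α₁ α₂ β₁ β₂ : ℝ} (hβ₁ : |β₁| < α₁) (hβ₂ : |β₂| < α₂)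
    (z : ℝ) :
    ratioDensity (fun x => ENNReal.ofReal (asymLaplacePDFReal α₁ β₁ x))
        (fun x => ENNReal.ofReal (asymLaplacePDFReal α₂ β₂ x)) z =
      ENNReal.ofReal ((α₁ ^ 2 - β₁ ^ 2) * (α₂ ^ 2 - β₂ ^ 2) / (4 * α₁ * α₂) *
        (1 / (α₁ * |z| + α₂ + β₁ * z + β₂) ^ 2 + 1 / (α₁ * |z| + α₂ - β₁ * z - β₂) ^ 2)) := by
  have hneg := lintegral_Ioi_asymLaplacePDFReal (β₁ := -β₁) (β₂ := -β₂)
    (by rwa [abs_neg]) (by rwa [abs_neg]) z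
  simp only [← asymLaplacePDFReal_neg, neg_sq, ← neg_mul] at hneg
  have hc := sq_sub_sq_mul_sq_sub_sq_div_nonneg hβ₁ hβ₂
  rw [ratioDensity, lintegral_eq_lintegral_Ioi_add_lintegral_Ioi_neg,
    lintegral_Ioi_asymLaplacePDFReal hβ₁ hβ₂]
  simp only [abs_neg]
  rw [hneg, ← ENNReal.ofReal_add (by positivity) (by positivity)]
  congr 1
  ring

end

theorem asymmetric_laplace_ratio_density {Ω : Type*} [MeasurableSpace Ω] (μ : Measure Ω)
    [IsProbabilityMeasure μ] (X₁ X₂ : Ω → ℝ) (α₁ α₂ β₁ β₂ : ℝ)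
    (hβ₁ : |β₁| < α₁) (hβ₂ : |β₂| < α₂)
    (hX₁ : Measure.map X₁ μ = volume.withDensity fun x =>
      ENNReal.ofReal ((α₁^2-β₁^2)/(2*α₁) * Real.exp (β₁*x - α₁*|x|)))
    (hX₂ : Measure.map X₂ μ = volume.withDensity fun x =>
      ENNReal.ofReal ((α₂^2-β₂^2)/(2*α₂) * Real.exp (β₂*x - α₂*|x|)))
    (hInd : IndepFun X₁ X₂ μ) :
    Measure.map (fun ω => X₁ ω / X₂ ω) μ =
      volume.withDensity fun z => ENNReal.ofReal
        ((α₁^2-β₁^2) * (α₂^2-β₂^2) / (4*α₁*α₂) *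
          (1/(α₁*|z| + α₂ + β₁*z + β₂)^2 + 1/(α₁*|z| + α₂ - β₁*z - β₂)^2)) := by
  have hX₁m : AEMeasurable X₁ μ :=
    .of_map_ne_zero (by rw [hX₁]; exact withDensity_asymLaplacePDFReal_ne_zero hβ₁)
  have hX₂m : AEMeasurable X₂ μ :=
    .of_map_ne_zero (by rw [hX₂]; exact withDensity_asymLaplacePDFReal_ne_zero hβ₂)
  have hdiv : Measurable fun p : ℝ × ℝ => p.1 / p.2 := measurable_fst.div measurable_snd
  calc μ.map (fun ω => X₁ ω / X₂ ω) = (μ.map fun ω => (X₁ ω, X₂ ω)).map fun p => p.1 / p.2 :=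
        (AEMeasurable.map_map_of_aemeasurable hdiv.aemeasurable (hX₁m.prodMk hX₂m)).symm
    _ = volume.withDensity (ratioDensity (fun x => ENNReal.ofReal (asymLaplacePDFReal α₁ β₁ x))
          (fun x => ENNReal.ofReal (asymLaplacePDFReal α₂ β₂ x))) := by
        rw [hInd.map_prod_eq_prod_map_map hX₁m hX₂m, hX₁, hX₂]
        exact map_div_prod_withDensity (measurable_asymLaplacePDFReal α₁ β₁).ennreal_ofReal
          (measurable_asymLaplacePDFReal α₂ β₂).ennreal_ofReal
    _ = _ := congrArg _ (funext (ratioDensity_asymLaplacePDFReal hβ₁ hβ₂))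
end
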